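/- For every integer k and every real x, the following identity of formal power series in ℝ[[t]] holds: Lif_{k,p,q}(L(t)) · exp(−x·L(t)) = Σ_{n≥0} C_{n,p,q}^{(k)}(x) · t^n/n!, where L(t) = Σ_{n≥1} (−1)^{n−1} t^n/n is the formal logarithm log(1+t), so the left-hand side is Lif_{k,p,q}(log(1+t))·(1+t)^{−x}. -/

import Mathlib

open Finset

/-- The `(p,q)`-integer `[m]_{p,q} = (p^m - q^m)/(p - q)`. -/
noncomputable def pqInt (p q : ℝ) (m : ℕ) : ℝ := (p ^ m - q ^ m) / (p - q)

/-- The exponential generating function `∑ f n * t^n / n!` of a sequence `f`. -/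
noncomputable def egf (f : ℕ → ℝ) : PowerSeries ℝ :=
  PowerSeries.mk fun n => f n / n.factorial

/-- The unsigned Stirling numbers of the first kind, defined by the recurrence
`S1(n+1, m+1) = n * S1(n, m+1) + S1(n, m)`, so that
`x(x+1)⋯(x+n-1) = ∑_{m=0}^{n} S1(n,m) x^m`. -/
def stirling1 : ℕ → ℕ → ℕ
  | 0, 0 => 1
  | 0, _ + 1 => 0
  | _ + 1, 0 => 0
  | n + 1, m + 1 => n * stirling1 n (m + 1) + stirling1 n m

/-- The `(p,q)`-poly-Cauchy polynomials of the first kind. -/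
noncomputable def pqCauchy1 (p q : ℝ) (k : ℤ) (x : ℝ) (n : ℕ) : ℝ :=
  ∑ m ∈ Finset.range (n + 1),
    (-1 : ℝ) ^ (n - m) * (stirling1 n m : ℝ) *
      ∑ l ∈ Finset.range (m + 1),
        (m.choose l : ℝ) * (-x) ^ l / pqInt p q (m - l + 1) ^ k

/-- The `(p,q)`-poly-Cauchy polynomials of the second kind. -/
noncomputable def pqCauchy2 (p q : ℝ) (k : ℤ) (x : ℝ) (n : ℕ) : ℝ :=
  (-1 : ℝ) ^ n *
    ∑ m ∈ Finset.range (n + 1),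
      (stirling1 n m : ℝ) *
        ∑ l ∈ Finset.range (m + 1),
          (m.choose l : ℝ) * (-x) ^ l / pqInt p q (m - l + 1) ^ k

/-- Formal substitution of a power series `S` with zero constant term into the
`k`-th `(p,q)`-polylogarithm factorial function
`Lif_{k,p,q}(s) = ∑_{m ≥ 0} s^m / (m! [m+1]_{p,q}^k)`.
(For `m > n` the series `S^m` has zero `n`-th coefficient, so the sum is finite.) -/
noncomputable def pqLif (p q : ℝ) (k : ℤ) (S : PowerSeries ℝ) : PowerSeries ℝ :=
  PowerSeries.mk fun n =>
    ∑ m ∈ Finset.range (n + 1),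
      PowerSeries.coeff n (S ^ m) / ((m.factorial : ℝ) * pqInt p q (m + 1) ^ k)

/-- Formal substitution of a power series `S` with zero constant term into the
exponential series `exp(s) = ∑_{m ≥ 0} s^m / m!`. -/
noncomputable def expComp (S : PowerSeries ℝ) : PowerSeries ℝ :=
  PowerSeries.mk fun n =>
    ∑ m ∈ Finset.range (n + 1), PowerSeries.coeff n (S ^ m) / (m.factorial : ℝ)

/-- The formal logarithm `log(1 + t) = ∑_{n ≥ 1} (-1)^(n-1) t^n / n`. -/
noncomputable def logOnePlus : PowerSeries ℝ :=
  PowerSeries.mk fun n => if n = 0 then 0 else (-1 : ℝ) ^ (n - 1) / n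

/-! Substituting `log(1+t)` is a ring homomorphism on formal power series, so the left-hand side
is `Lif_{k,p,q}(s) · e^{-xs}` evaluated at `s = log(1+t)`. The `m`-th coefficient of that product,
times `m!`, is the inner binomial sum of `C_{n,p,q}^{(k)}(x)`, and
`n! [t^n] log(1+t)^m = (-1)^(n-m) S_1(n,m) m!`: comparing coefficients in
`(1+t) · d/dt log(1+t)^(m+1) = (m+1) log(1+t)^m` gives exactly the recurrence of the signed
Stirling numbers. -/

open PowerSeries Nat

theorem coeff_X_mul_derivative {R : Type*} [CommSemiring R] (f : R⟦X⟧) (n : ℕ) :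
    coeff n (X * d⁄dX R f) = coeff n f * n := by
  cases n <;> simp [coeff_succ_X_mul, coeff_derivative]

section Subst
variable {R : Type*} [CommRing R]

theorem coeff_pow_eq_zero_of_lt {S : R⟦X⟧} (hS : constantCoeff S = 0) {n m : ℕ} (h : n < m) :
    coeff n (S ^ m) = 0 :=
  coeff_of_lt_order _ <| (Nat.cast_lt.mpr h).trans_le (le_order_pow_of_constantCoeff_eq_zero m hS)

theorem coeff_subst_eq_sum_range {S : R⟦X⟧} (hS : constantCoeff S = 0) (f : R⟦X⟧) (n : ℕ) :
    coeff n (f.subst S) = ∑ m ∈ range (n + 1), coeff m f * coeff n (S ^ m) := by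
  rw [coeff_subst' (HasSubst.of_constantCoeff_zero' hS)]
  refine finsum_eq_sum_of_support_subset _ fun m hm => ?_
  rw [coe_range, Set.mem_Iio, Nat.lt_succ_iff]
  by_contra! h
  exact hm (by simp [coeff_pow_eq_zero_of_lt hS h])

end Subst

theorem constantCoeff_logOnePlus : constantCoeff logOnePlus = 0 := by
  simp [logOnePlus]

theorem one_add_X_mul_derivative_logOnePlus : (1 + X) * d⁄dX ℝ logOnePlus = 1 := by
  have hcoeff (n : ℕ) : coeff n (d⁄dX ℝ logOnePlus) = (-1) ^ n := by
    rw [coeff_derivative, logOnePlus, coeff_mk, if_neg n.succ_ne_zero, Nat.add_sub_cancel]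
    field_simp
    push_cast
    ring
  ext (_ | n)
  · rw [add_mul, one_mul, map_add, coeff_zero_X_mul, hcoeff]
    simp
  · simp [add_mul, coeff_succ_X_mul, hcoeff, pow_succ]

theorem one_add_X_mul_derivative_logOnePlus_pow (m : ℕ) :
    (1 + X) * d⁄dX ℝ (logOnePlus ^ (m + 1)) = (m + 1 : ℝ⟦X⟧) * logOnePlus ^ m := by
  rw [derivative_pow, Nat.add_sub_cancel]
  push_cast
  linear_combination ((m + 1 : ℝ⟦X⟧) * logOnePlus ^ m) * one_add_X_mul_derivative_logOnePlus

theorem stirling1_eq_stirlingFirst : stirling1 = Nat.stirlingFirst := by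
  funext n m
  induction n generalizing m with
  | zero => cases m <;> rfl
  | succ n ih => cases m <;> simp [stirling1, Nat.stirlingFirst, ih]

theorem signed_stirling1_succ_succ (n m : ℕ) :
    (-1 : ℝ) ^ (n + 1 - (m + 1)) * stirling1 (n + 1) (m + 1) =
      -n * ((-1) ^ (n - (m + 1)) * stirling1 n (m + 1)) + (-1) ^ (n - m) * stirling1 n m := by
  rw [stirling1_eq_stirlingFirst, Nat.stirlingFirst_succ_succ, Nat.add_sub_add_right]
  rcases lt_trichotomy n m with h | rfl | h
  · simp [Nat.stirlingFirst_eq_zero_of_lt, h, h.trans (Nat.lt_succ_self m)]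
  · simp [Nat.stirlingFirst_eq_zero_of_lt]
  · obtain ⟨d, rfl⟩ := Nat.exists_eq_add_of_lt h
    rw [show m + d + 1 - m = (m + d + 1 - (m + 1)) + 1 by omega, pow_succ]
    push_cast
    ring

theorem factorial_mul_coeff_logOnePlus_pow (n m : ℕ) :
    (n ! : ℝ) * coeff n (logOnePlus ^ m) = (-1) ^ (n - m) * stirling1 n m * m ! := by
  induction n generalizing m with
  | zero =>
    cases m <;> simp [stirling1, constantCoeff_logOnePlus]
  | succ n ih =>
    cases m with
    | zero => simp [stirling1, coeff_one]
    | succ m =>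
      have hrec := congrArg (coeff n) (one_add_X_mul_derivative_logOnePlus_pow m)
      rw [add_mul, one_mul, map_add, coeff_X_mul_derivative, coeff_derivative] at hrec
      have hC : (m + 1 : ℝ⟦X⟧) = C ((m : ℝ) + 1) := by simp
      rw [hC, coeff_C_mul] at hrec
      have ihm1 := ih (m + 1)
      rw [factorial_succ m] at ihm1 ⊢
      rw [signed_stirling1_succ_succ, factorial_succ]
      push_cast at ihm1 ⊢
      linear_combination (n ! : ℝ) * hrec + (m + 1 : ℝ) * ih m - n * ihm1

theorem factorial_mul_coeff_subst_logOnePlus (F : ℝ⟦X⟧) (n : ℕ) :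
    (n ! : ℝ) * coeff n (F.subst logOnePlus) =
      ∑ m ∈ range (n + 1), (-1) ^ (n - m) * stirling1 n m * (m ! * coeff m F) := by
  rw [coeff_subst_eq_sum_range constantCoeff_logOnePlus, mul_sum]
  refine sum_congr rfl fun m _ => ?_
  linear_combination coeff m F * factorial_mul_coeff_logOnePlus_pow n m

theorem expComp_smul_eq_subst {S : ℝ⟦X⟧} (hS : constantCoeff S = 0) (c : ℝ) :
    expComp (c • S) = (rescale c (exp ℝ)).subst S := by
  ext n
  rw [expComp, coeff_mk, coeff_subst_eq_sum_range hS]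
  refine sum_congr rfl fun m _ => ?_
  simp only [smul_pow, map_smul, smul_eq_mul, coeff_rescale, coeff_exp, one_div, map_inv₀,
    map_natCast]
  ring

noncomputable def pqLifSeries (p q : ℝ) (k : ℤ) : ℝ⟦X⟧ :=
  mk fun m => ((m ! : ℝ) * pqInt p q (m + 1) ^ k)⁻¹

theorem pqLif_eq_subst (p q : ℝ) (k : ℤ) {S : ℝ⟦X⟧} (hS : constantCoeff S = 0) :
    pqLif p q k S = (pqLifSeries p q k).subst S := by
  ext n
  rw [pqLif, coeff_mk, coeff_subst_eq_sum_range hS]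
  refine sum_congr rfl fun m _ => ?_
  rw [pqLifSeries, coeff_mk, div_eq_inv_mul]

theorem factorial_mul_coeff_pqLifSeries_mul_rescale_exp (p q : ℝ) (k : ℤ) (c : ℝ) (m : ℕ) :
    (m ! : ℝ) * coeff m (pqLifSeries p q k * rescale c (exp ℝ)) =
      ∑ l ∈ range (m + 1), (m.choose l : ℝ) * c ^ l / pqInt p q (m - l + 1) ^ k := by
  rw [coeff_mul, ← Nat.sum_antidiagonal_swap, Nat.sum_antidiagonal_eq_sum_range_succ_mk, mul_sum]
  refine sum_congr rfl fun l hl => ?_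
  have hlm : l ≤ m := Nat.lt_succ_iff.mp (mem_range.mp hl)
  simp only [Prod.swap_prod_mk, pqLifSeries, coeff_mk, coeff_rescale, coeff_exp, one_div,
    map_inv₀, map_natCast, Nat.cast_choose ℝ hlm]
  field_simp

theorem pqPolyCauchy_first_kind_genFun_general
    (p q : ℝ) (k : ℤ) (x : ℝ) :
    pqLif p q k logOnePlus * expComp ((-x) • logOnePlus) = egf (pqCauchy1 p q k x) := by
  ext n
  rw [pqLif_eq_subst p q k constantCoeff_logOnePlus,
    expComp_smul_eq_subst constantCoeff_logOnePlus,
    ← subst_mul (HasSubst.of_constantCoeff_zero' constantCoeff_logOnePlus), egf, coeff_mk,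
    eq_div_iff (by positivity), mul_comm, factorial_mul_coeff_subst_logOnePlus, pqCauchy1]
  simp_rw [factorial_mul_coeff_pqLifSeries_mul_rescale_exp]

theorem pqPolyCauchy_first_kind_genFun
    (p q : ℝ) (hq : 0 < q) (hqp : q < p) (hp : p ≤ 1) (k : ℤ) (x : ℝ) :
    pqLif p q k logOnePlus * expComp ((-x) • logOnePlus) = egf (pqCauchy1 p q k x) :=
  pqPolyCauchy_first_kind_genFun_general p q k x
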